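/- If G is a simple graph on n vertices and u, v are nonadjacent vertices with deg(u) + deg(v) ≥ n, then G is Hamiltonian if and only if the graph G + uv (obtained by adding the edge uv) is Hamiltonian. -/

import Mathlib

/-!
A Hamiltonian cycle of `G ⊔ edge u v` either avoids `s(u, v)`, and then lives in `G`, or
deleting that edge leaves a Hamiltonian path `u = x₀, x₁, …, x_L = v` of `G`. Since
`L = n - 1 < deg u + deg v`, the sets `{i | u ~ x_{i+1}}` and `{i | x_i ~ v}` of indices
below `L` meet. For such an `i` the Pósa rotation `x₀ … x_i x_L x_{L-1} … x_{i+1}` is again a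
Hamiltonian path of `G`, and the edge `x_{i+1} u` closes it into a Hamiltonian cycle.
-/

open Finset

namespace SimpleGraph

variable {V : Type*} {G : SimpleGraph V} {u v a b : V}

namespace Walk

/-- For `p = x₀ … x_L`, the walk `x₀ … x_i x_L x_{L-1} … x_{i+1}`. -/
def posaRotate (p : G.Walk u v) (i : ℕ) (h : G.Adj (p.getVert i) v) :
    G.Walk u (p.getVert (i + 1)) :=
  (p.take i).append (cons h (p.drop (i + 1)).reverse)

lemma support_posaRotate_perm (p : G.Walk u v) {i : ℕ} (hi : i < p.length)
    (h : G.Adj (p.getVert i) v) : (p.posaRotate i h).support.Perm p.support := by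
  rw [posaRotate, support_append, support_cons, List.tail_cons, support_reverse, support_take,
    drop_support_eq_support_drop_min, min_eq_left hi]
  conv_rhs => rw [← List.take_append_drop (i + 1) p.support]
  exact (List.reverse_perm _).append_left _

section Hamiltonian

variable [DecidableEq V]

lemma IsHamiltonian.posaRotate {p : G.Walk u v} (hp : p.IsHamiltonian) {i : ℕ}
    (hi : i < p.length) (h : G.Adj (p.getVert i) v) : (p.posaRotate i h).IsHamiltonian :=
  fun w => ((p.support_posaRotate_perm hi h).count_eq w).trans (hp w)

lemma IsHamiltonian.isHamiltonianCycle_cons [Fintype V] {p : G.Walk a b} (hp : p.IsHamiltonian)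
    (h : G.Adj b a) (hn : 3 ≤ Fintype.card V) : (cons h p).IsHamiltonianCycle := by
  have hlen : (cons h p).length = Fintype.card V := by
    rw [length_cons, hp.length_eq]
    omega
  rw [isHamiltonianCycle_iff_isCycle_and_length_eq, isCycle_iff_isPath_tail_and_le_length, hlen]
  exact ⟨⟨by simpa using hp.isPath, hn⟩, rfl⟩

lemma IsHamiltonian.exists_adj_getVert_succ_and_adj_getVert [Fintype V] [DecidableRel G.Adj]
    {p : G.Walk u v} (hp : p.IsHamiltonian)
    (hdeg : Fintype.card V ≤ G.degree u + G.degree v) :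
    ∃ i < p.length, G.Adj u (p.getVert (i + 1)) ∧ G.Adj (p.getVert i) v := by
  set S := (range p.length).filter fun i => G.Adj u (p.getVert (i + 1))
  set T := (range p.length).filter fun i => G.Adj (p.getVert i) v
  have hS : G.degree u ≤ #S := by
    rw [← card_neighborFinset_eq_degree]
    refine (card_le_card fun w hw => ?_).trans (card_image_le (f := fun i => p.getVert (i + 1)))
    rw [mem_neighborFinset] at hw
    obtain ⟨j, rfl, hj⟩ := mem_support_iff_exists_getVert.mp (hp.mem_support w)
    obtain ⟨i, rfl⟩ : ∃ i, j = i + 1 :=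
      Nat.exists_eq_add_one.mpr (Nat.pos_of_ne_zero fun h0 => by simp [h0] at hw)
    exact mem_image.mpr ⟨i, by simp [S, hw]; omega, rfl⟩
  have hT : G.degree v ≤ #T := by
    rw [← card_neighborFinset_eq_degree]
    refine (card_le_card fun w hw => ?_).trans (card_image_le (f := p.getVert))
    rw [mem_neighborFinset] at hw
    obtain ⟨i, rfl, hi⟩ := mem_support_iff_exists_getVert.mp (hp.mem_support w)
    have : i ≠ p.length := fun hL => by simp [hL] at hw
    exact mem_image.mpr ⟨i, by simp [T, hw.symm]; omega, rfl⟩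
  have hL : p.length + 1 = Fintype.card V := p.length_support.symm.trans hp.length_support
  obtain ⟨i, hi⟩ :=
    inter_nonempty_of_card_lt_card_add_card (s := range p.length) (t := S) (u := T)
      (filter_subset _ _) (filter_subset _ _) (by rw [card_range]; omega)
  simp only [S, T, mem_inter, mem_filter, mem_range] at hi
  exact ⟨i, hi.1.1, hi.1.2, hi.2.2⟩

lemma IsHamiltonianCycle.reverse {c : G.Walk u u} (hc : c.IsHamiltonianCycle) :
    c.reverse.IsHamiltonianCycle := by
  have := hc.finite
  have := Fintype.ofFinite V
  rw [isHamiltonianCycle_iff_isCycle_and_length_eq] at hc ⊢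
  exact ⟨hc.1.reverse, by rw [length_reverse, hc.2]⟩

lemma IsHamiltonian.transfer {H : SimpleGraph V} {p : G.Walk a b} (hp : p.IsHamiltonian)
    (hH : ∀ e ∈ p.edges, e ∈ H.edgeSet) : (p.transfer H hH).IsHamiltonian := by
  simpa [IsHamiltonian, support_transfer] using hp

lemma IsHamiltonianCycle.transfer {H : SimpleGraph V} {c : G.Walk u u}
    (hc : c.IsHamiltonianCycle) (hH : ∀ e ∈ c.edges, e ∈ H.edgeSet) :
    (c.transfer H hH).IsHamiltonianCycle := by
  rw [isHamiltonianCycle_iff_isCycle_and_support_count_tail_eq_one] at hc ⊢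
  rw [support_transfer]
  exact ⟨hc.1.transfer hH, hc.2⟩

end Hamiltonian

lemma IsCycle.snd_eq_or_penultimate_eq_of_mem_edges {c : G.Walk u u} (hc : c.IsCycle) {w : V}
    (he : s(u, w) ∈ c.edges) : c.snd = w ∨ c.penultimate = w := by
  cases c with
  | nil => exact absurd hc not_isCycle_nil
  | cons h q =>
    obtain ⟨hq, -⟩ := (cons_isCycle_iff q h).mp hc
    rw [edges_cons, List.mem_cons] at he
    rcases he with he | he
    · exact .inl (by simpa using (Sym2.congr_right.mp he).symm)
    · have hq_nil : ¬q.Nil := fun hnil => G.irrefl (hnil.eq ▸ h)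
      rw [penultimate_cons_of_not_nil _ _ hq_nil]
      exact .inr (hq.eq_penultimate_of_mem_edges (Sym2.eq_swap ▸ he)).symm

lemma IsCycle.notMem_edges_tail {c : G.Walk u u} (hc : c.IsCycle) :
    s(u, c.snd) ∉ c.tail.edges := by
  rw [← c.cons_tail_eq hc.not_nil] at hc
  exact ((cons_isCycle_iff _ _).mp hc).2

lemma IsHamiltonianCycle.exists_isHamiltonian_notMem_edges [DecidableEq V] {c : G.Walk u u}
    (hc : c.IsHamiltonianCycle) {w : V} (he : s(u, w) ∈ c.edges) :
    ∃ p : G.Walk w u, p.IsHamiltonian ∧ s(u, w) ∉ p.edges := by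
  rcases hc.isCycle.snd_eq_or_penultimate_eq_of_mem_edges he with rfl | rfl
  · exact ⟨c.tail, hc.isHamiltonian_tail, hc.isCycle.notMem_edges_tail⟩
  · rw [← snd_reverse]
    exact ⟨c.reverse.tail, hc.reverse.isHamiltonian_tail, hc.reverse.isCycle.notMem_edges_tail⟩

lemma edges_subset_edgeSet_of_notMem_edges {p : (G ⊔ edge u v).Walk a b}
    (hp : s(u, v) ∉ p.edges) : ∀ e ∈ p.edges, e ∈ G.edgeSet := fun _ he =>
  (edgeSet_sup G _ ▸ p.edges_subset_edgeSet he).resolve_right fun h =>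
    hp (Set.mem_singleton_iff.mp (edgeSet_edge_subset h) ▸ he)

end Walk

theorem isHamiltonian_of_card_le_degree_add_degree [Fintype V] [DecidableEq V]
    [DecidableRel G.Adj] {p : G.Walk u v} (hp : p.IsHamiltonian) (hn : 3 ≤ Fintype.card V)
    (hdeg : Fintype.card V ≤ G.degree u + G.degree v) : G.IsHamiltonian := by
  obtain ⟨i, hi, hu, hv⟩ := hp.exists_adj_getVert_succ_and_adj_getVert hdeg
  exact fun _ => ⟨_, _, (hp.posaRotate hi hv).isHamiltonianCycle_cons hu.symm hn⟩

end SimpleGraph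

open SimpleGraph Walk

theorem bondy_chvatal_lemma_general {V : Type*} [Fintype V] [DecidableEq V]
    (G : SimpleGraph V) [DecidableRel G.Adj] (u v : V)
    (hn : 3 ≤ Fintype.card V)
    (hdeg : Fintype.card V ≤ G.degree u + G.degree v) :
    G.IsHamiltonian ↔ (G ⊔ SimpleGraph.edge u v).IsHamiltonian := by
  refine ⟨IsHamiltonian.mono le_sup_left, fun hH => ?_⟩
  have : Nontrivial V := Fintype.one_lt_card_iff_nontrivial.mp (by omega)
  obtain ⟨c, hc⟩ := hH.exists_isHamiltonianCycle u
  by_cases he : s(u, v) ∈ c.edges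
  · obtain ⟨p, hp, hpe⟩ := hc.exists_isHamiltonian_notMem_edges he
    exact isHamiltonian_of_card_le_degree_add_degree
      (hp.transfer (edges_subset_edgeSet_of_notMem_edges hpe)) hn (by omega)
  · exact fun _ => ⟨u, _, hc.transfer (edges_subset_edgeSet_of_notMem_edges he)⟩

theorem bondy_chvatal_lemma {V : Type*} [Fintype V] [DecidableEq V]
    (G : SimpleGraph V) [DecidableRel G.Adj] (u v : V)
    (hn : 3 ≤ Fintype.card V) (huv : u ≠ v) (hnadj : ¬ G.Adj u v)
    (hdeg : Fintype.card V ≤ G.degree u + G.degree v) :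
    G.IsHamiltonian ↔ (G ⊔ SimpleGraph.edge u v).IsHamiltonian :=
  bondy_chvatal_lemma_general G u v hn hdeg
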